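/- arXiv:2511.14402 — 4 statements merged into one kernel-verified Lean document; each statement's English description precedes it below -/
import Mathlib

section
/- Let p : E → B be a Grothendieck fibration, let I be a connected category, and let D : I → E be a diagram landing entirely in the fibre E_b over an object b of B. If a cocone (q_i : D i → L) in the fibre category E_b is colimiting in E_b, then it is also colimiting in the total category E. -/
/-!
Statement 0: Let `p : E ⥤ B` be a Grothendieck fibration, `I` a connected category, and
`D : I ⥤ E` a diagram landing entirely in the fibre `E_b` over `b`.  If a cocone on `D` in the
fibre category is colimiting there, then its image in the total category `E` is also colimiting.
-/

open CategoryTheory CategoryTheory.Functor CategoryTheory.Limits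

universe v₁ v₂ u₁ u₂ v u

theorem fiber_obj_proj {𝒮 : Type u₁} {𝒳 : Type u₂} [Category.{v₁} 𝒮] [Category.{v₂} 𝒳]
    {p : 𝒳 ⥤ 𝒮} {S : 𝒮} (a : p.Fiber S) : p.obj (Fiber.fiberInclusion.obj a) = S := a.2

theorem fiberwise_connected_colimit_is_global_colimit
    {𝒮 : Type u₁} {𝒳 : Type u₂} [Category.{v₁} 𝒮] [Category.{v₂} 𝒳]
    (p : 𝒳 ⥤ 𝒮) [p.IsFibered]
    {I : Type u} [Category.{v} I] [IsConnected I]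
    (b : 𝒮) (D : I ⥤ p.Fiber b) (c : Cocone D) (hc : IsColimit c) :
    Nonempty (IsColimit (Fiber.fiberInclusion.mapCocone c)) := by
  refine ⟨IsColimit.ofExistsUnique fun s => ?_⟩
  have i₀ : I := Classical.arbitrary I
  -- all legs of `s` lie over the same morphism `φ : b ⟶ p.obj s.pt`
  have const : ∀ i j : I,
      eqToHom (fiber_obj_proj (D.obj i)).symm ≫ p.map (s.ι.app i)
        = eqToHom (fiber_obj_proj (D.obj j)).symm ≫ p.map (s.ι.app j) := by
    refine constant_of_preserves_morphisms
      (fun i : I => eqToHom (fiber_obj_proj (D.obj i)).symm ≫ p.map (s.ι.app i)) (fun i j g => ?_)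
    rw [← s.w g]
    have h : p.map ((D ⋙ Fiber.fiberInclusion).map g)
        = eqToHom (fiber_obj_proj (D.obj i)) ≫ 𝟙 b ≫ eqToHom (fiber_obj_proj (D.obj j)).symm :=
      IsHomLift.fac' p (𝟙 b) (Fiber.fiberInclusion.map (D.map g))
    rw [Functor.map_comp, h]
    simp
  set φ : b ⟶ p.obj s.pt := eqToHom (fiber_obj_proj (D.obj i₀)).symm ≫ p.map (s.ι.app i₀) with hφ
  have hlift : ∀ i : I, p.IsHomLift φ (s.ι.app i) := by
    intro i
    refine IsHomLift.of_fac' p φ (s.ι.app i) (fiber_obj_proj (D.obj i)) rfl ?_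
    rw [hφ, const i₀ i]
    simp
  -- cartesian lift of φ
  set ψ := IsPreFibered.pullbackMap (rfl : p.obj s.pt = p.obj s.pt) φ with hψ
  have hw : p.obj (IsPreFibered.pullbackObj (rfl : p.obj s.pt = p.obj s.pt) φ) = b :=
    IsPreFibered.pullbackObj_proj rfl φ
  -- cocone on D in the fiber with apex the pullback
  let s' : Cocone D :=
    { pt := Fiber.mk hw
      ι :=
        { app := fun i =>
            haveI := hlift i
            ⟨(IsCartesian.map p φ ψ (s.ι.app i) :), IsCartesian.map_isHomLift p φ ψ (s.ι.app i)⟩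
          naturality := by
            intro i j g
            haveI := hlift i; haveI := hlift j
            ext
            show Fiber.fiberInclusion.map (D.map g) ≫ _ = _ ≫ 𝟙 _
            erw [Category.comp_id]
            refine @IsCartesian.ext _ _ _ _ p _ _ _ _ φ ψ _ _ _ _
              (D.map g ≫ (⟨(IsCartesian.map p φ ψ (s.ι.app j) :),
                IsCartesian.map_isHomLift p φ ψ (s.ι.app j)⟩ : D.obj j ⟶ Fiber.mk hw)).2
              (IsCartesian.map_isHomLift p φ ψ (s.ι.app i)) ?_
            simp only [Category.assoc, IsCartesian.fac]
            exact (Category.assoc _ _ _).trans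
              ((congrArg _ (IsCartesian.fac p φ ψ (s.ι.app j))).trans (s.w g)) } }
  haveI := hlift i₀
  refine ⟨Fiber.fiberInclusion.map (hc.desc s') ≫ ψ, fun i => ?_, fun m hm => ?_⟩
  · haveI := hlift i
    have := hc.fac s' i
    calc Fiber.fiberInclusion.map (c.ι.app i) ≫ Fiber.fiberInclusion.map (hc.desc s') ≫ ψ
        = Fiber.fiberInclusion.map (c.ι.app i ≫ hc.desc s') ≫ ψ := by
          rw [Functor.map_comp]; exact (Category.assoc _ _ _).symm
      _ = Fiber.fiberInclusion.map (s'.ι.app i) ≫ ψ := by rw [this]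
      _ = s.ι.app i := IsCartesian.fac p φ ψ (s.ι.app i)
  · -- uniqueness
    have hm' : ∀ i, Fiber.fiberInclusion.map (c.ι.app i) ≫ m = s.ι.app i := by
      intro i; simpa using hm i
    haveI hmlift : p.IsHomLift φ m := by
      refine IsHomLift.of_fac' p φ m (fiber_obj_proj c.pt) rfl ?_
      have h1 : p.map (Fiber.fiberInclusion.map (c.ι.app i₀))
          = eqToHom (fiber_obj_proj (D.obj i₀)) ≫ 𝟙 b ≫ eqToHom (fiber_obj_proj c.pt).symm :=
        IsHomLift.fac' p (𝟙 b) (Fiber.fiberInclusion.map (c.ι.app i₀))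
      have h2 := hm' i₀
      calc p.map m
          = (eqToHom (fiber_obj_proj c.pt) ≫ eqToHom (fiber_obj_proj (D.obj i₀)).symm
              ≫ p.map (Fiber.fiberInclusion.map (c.ι.app i₀))) ≫ p.map m := by
            rw [h1]; simp
        _ = eqToHom (fiber_obj_proj c.pt) ≫ eqToHom (fiber_obj_proj (D.obj i₀)).symm
              ≫ p.map (Fiber.fiberInclusion.map (c.ι.app i₀) ≫ m) := by
            simp
        _ = eqToHom (fiber_obj_proj c.pt) ≫ φ ≫ eqToHom (rfl : p.obj s.pt = p.obj s.pt).symm := by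
            rw [h2, hφ]; simp
    set τ := IsCartesian.map p φ ψ m with hτ
    have hτψ : τ ≫ ψ = m := IsCartesian.fac p φ ψ m
    let τ' : c.pt ⟶ s'.pt := ⟨τ, IsCartesian.map_isHomLift p φ ψ m⟩
    have hτ' : ∀ i, c.ι.app i ≫ τ' = s'.ι.app i := by
      intro i
      haveI := hlift i
      ext
      show Fiber.fiberInclusion.map (c.ι.app i) ≫ τ = _
      refine @IsCartesian.ext _ _ _ _ p _ _ _ _ φ ψ _ _ _ _ _ (s'.ι.app i).2 ?_
      rw [Category.assoc, hτψ,
        show Fiber.fiberInclusion.map (s'.ι.app i) = IsCartesian.map p φ ψ (s.ι.app i) from rfl,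
        IsCartesian.fac]
      exact hm' i
    have : τ' = hc.desc s' := hc.uniq s' τ' hτ'
    rw [← hτψ]
    show Fiber.fiberInclusion.map τ' ≫ ψ = _
    rw [this]
end

section
/- Let p : E → B and q : F → B be Grothendieck fibrations and let G : E → F be a fibred functor over B (i.e., q ∘ G = p and G preserves cartesian morphisms). If for every object b of B the restriction G_b : E_b → F_b of G to fibre categories admits a left adjoint, then G admits a left adjoint. -/
/-!
Statement 1: If `p : 𝒳 ⥤ 𝒮` and `q : 𝒴 ⥤ 𝒮` are Grothendieck fibrations and `G : 𝒳 ⥤ 𝒴` is a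
fibred functor over `𝒮` (i.e. `G ⋙ q = p` and `G` preserves cartesian morphisms) such that each
fibrewise restriction `G_b : Fiber p b ⥤ Fiber q b` admits a left adjoint, then `G` admits a
left adjoint.
-/

open CategoryTheory CategoryTheory.Functor CategoryTheory.Limits

universe v₁ v₂ v₃ u₁ u₂ u₃

theorem fibred_functor_isRightAdjoint_of_fibrewise
    {𝒮 : Type u₁} {𝒳 : Type u₂} {𝒴 : Type u₃}
    [Category.{v₁} 𝒮] [Category.{v₂} 𝒳] [Category.{v₃} 𝒴]
    (p : 𝒳 ⥤ 𝒮) (q : 𝒴 ⥤ 𝒮) [p.IsFibered] [q.IsFibered]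
    (G : 𝒳 ⥤ 𝒴) (hcomm : G ⋙ q = p)
    (hcart : ∀ {R S : 𝒮} (f : R ⟶ S) {a b : 𝒳} (φ : a ⟶ b),
      p.IsStronglyCartesian f φ → q.IsStronglyCartesian f (G.map φ))
    (Gfib : ∀ b : 𝒮, p.Fiber b ⥤ q.Fiber b)
    (hGfib : ∀ b : 𝒮, Gfib b ⋙ Fiber.fiberInclusion = Fiber.fiberInclusion ⋙ G)
    (hadj : ∀ b : 𝒮, (Gfib b).IsRightAdjoint) :
    G.IsRightAdjoint := by
  classical
  -- Basic translation lemmas from `hcomm`.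
  have hobj : ∀ x : 𝒳, q.obj (G.obj x) = p.obj x := fun x => Functor.congr_obj hcomm x
  have hmap : ∀ {x x' : 𝒳} (t : x ⟶ x'),
      q.map (G.map t) = eqToHom (hobj x) ≫ p.map t ≫ eqToHom (hobj x').symm := by
    intro x x' t
    simpa using Functor.congr_hom hcomm t
  have hlift : ∀ {R S : 𝒮} (f : R ⟶ S) {x x' : 𝒳} (t : x ⟶ x'),
      p.IsHomLift f t → q.IsHomLift f (G.map t) := by
    intro R S f x x' t ht
    haveI := ht
    have h1 : p.obj x = R := IsHomLift.domain_eq p f t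
    have h2 : p.obj x' = S := IsHomLift.codomain_eq p f t
    refine IsHomLift.of_fac' q f (G.map t) ((hobj x).trans h1) ((hobj x').trans h2) ?_
    rw [hmap t, IsHomLift.fac' p f t]
    simp
  -- It suffices to show each structured arrow category has an initial object.
  haveI : ∀ (y : 𝒴), HasInitial (StructuredArrow y G) := by
    intro y
    set b : 𝒮 := q.obj y with hb
    let y' : q.Fiber b := ⟨y, rfl⟩
    haveI := hadj b
    let Fb : q.Fiber b ⥤ p.Fiber b := (Gfib b).leftAdjoint
    let adj : Fb ⊣ Gfib b := Adjunction.ofIsRightAdjoint (Gfib b)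
    -- translation lemmas from `hGfib b`
    have hGobj : ∀ X : p.Fiber b, ((Gfib b).obj X).1 = G.obj X.1 := fun X =>
      Functor.congr_obj (hGfib b) X
    have hGmap : ∀ {X X' : p.Fiber b} (χ : X ⟶ X'),
        ((Gfib b).map χ).1 = eqToHom (hGobj X) ≫ G.map χ.1 ≫ eqToHom (hGobj X').symm := by
      intro X X' χ
      exact Functor.congr_hom (hGfib b) χ
    -- the candidate initial object
    let L' : p.Fiber b := Fb.obj y'
    let L : 𝒳 := L'.1
    have hL : p.obj L = b := L'.2
    let u : y ⟶ G.obj L := (adj.unit.app y').1 ≫ eqToHom (hGobj L')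
    haveI hu : q.IsHomLift (𝟙 b) u := by
      haveI : q.IsHomLift (𝟙 b) (adj.unit.app y').1 := (adj.unit.app y').2
      exact IsHomLift.eqToHom_comp_lift q (𝟙 b) (adj.unit.app y').1 (hGobj L')
    let X₀ : StructuredArrow y G := StructuredArrow.mk u
    -- construct the universal map to an arbitrary object
    have key : ∀ A : StructuredArrow y G, ∃! t : L ⟶ A.right, u ≫ G.map t = A.hom := by
      intro A
      set x : 𝒳 := A.right with hx
      set ψ : y ⟶ G.obj x := A.hom with hψ
      let f : b ⟶ p.obj x := q.map ψ ≫ eqToHom (hobj x)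
      haveI hψf : q.IsHomLift f ψ := by
        refine IsHomLift.of_fac' q f ψ rfl (hobj x) ?_
        simp [f]
      -- cartesian lift of `f` with codomain `x`
      let c : 𝒳 := IsPreFibered.pullbackObj (p := p) rfl f
      let φ : c ⟶ x := IsPreFibered.pullbackMap (p := p) rfl f
      haveI : p.IsCartesian f φ := IsPreFibered.pullbackMap.IsCartesian rfl f
      haveI hφsc : p.IsStronglyCartesian f φ := inferInstance
      have hc : p.obj c = b := IsPreFibered.pullbackObj_proj rfl f
      haveI hGφ : q.IsStronglyCartesian f (G.map φ) := hcart f φ hφsc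
      -- factor `ψ` through `G.map φ`
      let ψ₀ : y ⟶ G.obj c :=
        IsStronglyCartesian.map q f (G.map φ) (g := 𝟙 b) (Category.id_comp f).symm ψ
      haveI hψ₀ : q.IsHomLift (𝟙 b) ψ₀ :=
        IsStronglyCartesian.map_isHomLift q f (G.map φ) (Category.id_comp f).symm ψ
      have hψ₀fac : ψ₀ ≫ G.map φ = ψ :=
        IsStronglyCartesian.fac q f (G.map φ) (Category.id_comp f).symm ψ
      let c' : p.Fiber b := ⟨c, hc⟩
      have hGc : ((Gfib b).obj c').1 = G.obj c := hGobj c'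
      let ψ₁ : y' ⟶ (Gfib b).obj c' :=
        ⟨ψ₀ ≫ eqToHom hGc.symm, IsHomLift.eqToHom_comp_lift q (𝟙 b) ψ₀ hGc.symm⟩
      let χ : L' ⟶ c' := (adj.homEquiv y' c').symm ψ₁
      have hχ : adj.unit.app y' ≫ (Gfib b).map χ = ψ₁ := by
        simpa only [Adjunction.homEquiv_unit] using (adj.homEquiv y' c').apply_symm_apply ψ₁
      refine ⟨χ.1 ≫ φ, ?_, ?_⟩
      · -- existence
        have hval : (adj.unit.app y').1 ≫ ((Gfib b).map χ).1 = ψ₀ ≫ eqToHom hGc.symm :=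
          congrArg Subtype.val hχ
        show u ≫ G.map (χ.1 ≫ φ) = ψ
        rw [G.map_comp]
        calc u ≫ G.map χ.1 ≫ G.map φ
            = (adj.unit.app y').1 ≫ (eqToHom (hGobj L') ≫ G.map χ.1 ≫ eqToHom hGc.symm)
                ≫ eqToHom hGc ≫ G.map φ := by simp [u]
          _ = (adj.unit.app y').1 ≫ ((Gfib b).map χ).1 ≫ eqToHom hGc ≫ G.map φ := by
                rw [hGmap χ]
          _ = (ψ₀ ≫ eqToHom hGc.symm) ≫ eqToHom hGc ≫ G.map φ := by
                rw [← Category.assoc, hval]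
          _ = ψ₀ ≫ G.map φ := by simp
          _ = ψ := hψ₀fac
      · -- uniqueness
        intro t' ht'
        -- `t'` lies over `f`
        haveI hqt' : q.IsHomLift f (G.map t') := by
          have hq : q.map u ≫ q.map (G.map t') = q.map ψ := by
            rw [← q.map_comp, ht']
          have hqu : q.map u = eqToHom ((hobj L).trans hL).symm := by
            have := IsHomLift.fac' q (𝟙 b) u
            simpa using this
          rw [hqu] at hq
          refine IsHomLift.of_fac' q f (G.map t') ((hobj L).trans hL) (hobj x) ?_
          simp only [f]
          rw [← hq]
          simp
        haveI hpt' : p.IsHomLift f t' := by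
          refine IsHomLift.of_fac' p f t' hL rfl ?_
          have := IsHomLift.fac' q f (G.map t') 
          rw [hmap t'] at this
          have h2 : p.map t' =
              eqToHom (hobj L).symm ≫ (eqToHom ((hobj L).trans hL) ≫ f ≫
                eqToHom (hobj x).symm) ≫ eqToHom (hobj x) := by
            rw [← this]; simp
          rw [h2]; simp
        -- factor `t'` through `φ`
        let w : L ⟶ c := IsStronglyCartesian.map p f φ (g := 𝟙 b) (Category.id_comp f).symm t'
        haveI hw : p.IsHomLift (𝟙 b) w :=
          IsStronglyCartesian.map_isHomLift p f φ (Category.id_comp f).symm t'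
        have hwfac : w ≫ φ = t' :=
          IsStronglyCartesian.fac p f φ (Category.id_comp f).symm t'
        haveI hGw : q.IsHomLift (𝟙 b) (G.map w) := hlift (𝟙 b) w hw
        -- `u ≫ G.map w = ψ₀`
        haveI : q.IsHomLift (𝟙 b) (u ≫ G.map w) := IsHomLift.comp_lift_id_right' q (𝟙 b) u b (G.map w)
        have huw : u ≫ G.map w = ψ₀ := by
          refine IsStronglyCartesian.ext q f (G.map φ) (𝟙 b) ?_
          rw [Category.assoc, ← G.map_comp, hwfac, hψ₀fac, ht']
        -- interpret `w` as a fibre morphism and use the fibrewise adjunction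
        let χ' : L' ⟶ c' := ⟨w, hw⟩
        have hχ' : adj.unit.app y' ≫ (Gfib b).map χ' = ψ₁ := by
          apply Fiber.hom_ext
          show (adj.unit.app y').1 ≫ ((Gfib b).map χ').1 = ψ₀ ≫ eqToHom hGc.symm
          rw [hGmap χ', ← huw]
          simp [u]
          rfl
        have : χ' = χ := by
          apply (adj.homEquiv y' c').injective
          rw [Adjunction.homEquiv_unit, Adjunction.homEquiv_unit, hχ, hχ']
        have hw' : w = χ.1 := congrArg Subtype.val this
        rw [← hwfac, hw']
    -- package the universal property as an initial object
    have init : IsInitial X₀ := by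
      apply IsInitial.ofUniqueHom (fun A => StructuredArrow.homMk (key A).choose
        (by exact (key A).choose_spec.1))
      intro A m
      ext
      · exact (key A).choose_spec.2 m.right (by exact StructuredArrow.w m)
    exact init.hasInitial
  exact @isRightAdjointOfStructuredArrowInitials _ _ _ _ G this
end

section
/- Let U : A → C be a monadic functor with left adjoint F, and suppose C has colimits of shape D and A has coequalisers. Then A has colimits of shape D; explicitly, the colimit of a diagram G : D → A is computed as a coequaliser of a canonical parallel pair of morphisms F(colim(UFUG)) ⇉ F(colim(UG)). -/
/-!
Statement 4 (Linton): Let `U : A ⥤ C` be a monadic functor with left adjoint `F`, and suppose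
`C` has colimits of shape `D` and `A` has coequalisers.  Then `A` has colimits of shape `D`, and
the colimit of `G : D ⥤ A` is computed as the coequaliser of the canonical parallel pair
`F(colim (U F U G)) ⇉ F(colim (U G))`, with one leg `F` applied to `colim (U ε_G)` and the other
the composite of `F` of the canonical comparison map with the counit at `F (colim (U G))`.
-/

open CategoryTheory CategoryTheory.Limits

universe v₁ v₂ v₃ u₁ u₂ u₃

section LintonAux

variable {C : Type u₁} {A : Type u₂} {D : Type u₃}
    [Category.{v₁} C] [Category.{v₂} A] [Category.{v₃} D]
    (F : C ⥤ A) (U : A ⥤ C) (adj : F ⊣ U) [MonadicRightAdjoint U]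

/-- The Beck presentation of any object of `A` as a coequalizer of free objects. -/
noncomputable def lintonPresentation (X : A) :
    IsColimit (Cofork.ofπ (adj.counit.app X) (adj.counit_naturality (adj.counit.app X)) :
      Cofork (F.map (U.map (adj.counit.app X))) (adj.counit.app (F.obj (U.obj X)))) := by
  have sp : IsSplitCoequalizer (U.map (F.map (U.map (adj.counit.app X))))
      (U.map (adj.counit.app (F.obj (U.obj X)))) (U.map (adj.counit.app X)) :=
    { rightSection := adj.unit.app (U.obj X)
      leftSection := adj.unit.app (U.obj (F.obj (U.obj X)))
      condition := by
        rw [← U.map_comp, ← U.map_comp]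
        congr 1
        exact adj.counit_naturality _
      rightSection_π := adj.right_triangle_components X
      leftSection_bottom := adj.right_triangle_components _
      leftSection_top := by
        simpa using (adj.unit.naturality (U.map (adj.counit.app X))).symm }
  haveI : HasSplitCoequalizer (U.map (F.map (U.map (adj.counit.app X))))
      (U.map (adj.counit.app (F.obj (U.obj X)))) := ⟨⟨_, _, ⟨sp⟩⟩⟩
  haveI : CreatesColimit (parallelPair (F.map (U.map (adj.counit.app X)))
      (adj.counit.app (F.obj (U.obj X)))) U := by
    apply (config := {allowSynthFailures := true}) monadicCreatesColimitOfPreservesColimit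
    all_goals
      apply @preservesColimit_of_iso_diagram _ _ _ _ _ _ _ _ _ (diagramIsoParallelPair _).symm ?_
      dsimp
      infer_instance
  exact isColimitOfIsColimitCoforkMap U _ sp.isCoequalizer

lemma linton_pres_hom_ext (X : A) {Z : A} {m m' : X ⟶ Z}
    (w : adj.counit.app X ≫ m = adj.counit.app X ≫ m') : m = m' :=
  Cofork.IsColimit.hom_ext (lintonPresentation F U adj X) w

/-- Descending along the Beck presentation. -/
noncomputable def lintonDesc (X : A) {Z : A} (p : F.obj (U.obj X) ⟶ Z)
    (w : F.map (U.map (adj.counit.app X)) ≫ p = adj.counit.app (F.obj (U.obj X)) ≫ p) :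
    X ⟶ Z :=
  (lintonPresentation F U adj X).desc (Cofork.ofπ p w)

lemma linton_counit_desc (X : A) {Z : A} (p : F.obj (U.obj X) ⟶ Z)
    (w : F.map (U.map (adj.counit.app X)) ≫ p = adj.counit.app (F.obj (U.obj X)) ≫ p) :
    adj.counit.app X ≫ lintonDesc F U adj X p w = p :=
  Cofork.IsColimit.π_desc (lintonPresentation F U adj X)

include adj in
lemma linton_Fcolim_hom_ext [HasColimitsOfShape D C] {J : D ⥤ C} {Z : A}
    {p q : F.obj (colimit J) ⟶ Z}
    (w : ∀ d : D, F.map (colimit.ι J d) ≫ p = F.map (colimit.ι J d) ≫ q) : p = q := by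
  apply (adj.homEquiv _ _).injective
  apply colimit.hom_ext
  intro d
  rw [← adj.homEquiv_naturality_left, ← adj.homEquiv_naturality_left, w d]

variable [HasColimitsOfShape D C] [HasCoequalizers A] (G : D ⥤ A)

/-- First leg of the Linton parallel pair. -/
noncomputable def lintonFst : F.obj (colimit (G ⋙ (U ⋙ F) ⋙ U)) ⟶ F.obj (colimit (G ⋙ U)) :=
  F.map (colimMap (Functor.whiskerLeft G (Functor.whiskerRight adj.counit U)))

/-- Second leg of the Linton parallel pair. -/
noncomputable def lintonSnd : F.obj (colimit (G ⋙ (U ⋙ F) ⋙ U)) ⟶ F.obj (colimit (G ⋙ U)) :=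
  F.map (colimit.post (G ⋙ U) (F ⋙ U)) ≫ adj.counit.app (F.obj (colimit (G ⋙ U)))

/-- The candidate colimit object. -/
noncomputable def lintonQ : A := coequalizer (lintonFst F U adj G) (lintonSnd F U adj G)

/-- The coequalizer projection. -/
noncomputable def lintonπ : F.obj (colimit (G ⋙ U)) ⟶ lintonQ F U adj G :=
  coequalizer.π _ _

lemma linton_ι_fst (d : D) :
    F.map (colimit.ι (G ⋙ (U ⋙ F) ⋙ U) d) ≫ lintonFst F U adj G =
      F.map (U.map (adj.counit.app (G.obj d))) ≫ F.map (colimit.ι (G ⋙ U) d) := by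
  rw [lintonFst, ← F.map_comp, ← F.map_comp]
  congr 1
  exact ι_colimMap (Functor.whiskerLeft G (Functor.whiskerRight adj.counit U)) d

lemma linton_ι_snd (d : D) :
    F.map (colimit.ι (G ⋙ (U ⋙ F) ⋙ U) d) ≫ lintonSnd F U adj G =
      adj.counit.app (F.obj (U.obj (G.obj d))) ≫ F.map (colimit.ι (G ⋙ U) d) := by
  rw [lintonSnd, ← Category.assoc, ← F.map_comp]
  have h : colimit.ι (G ⋙ (U ⋙ F) ⋙ U) d ≫ colimit.post (G ⋙ U) (F ⋙ U) =
      U.map (F.map (colimit.ι (G ⋙ U) d)) :=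
    colimit.ι_post (G ⋙ U) (F ⋙ U) d
  rw [h, adj.counit_naturality]
  rfl

lemma lintonA (d : D) :
    F.map (U.map (adj.counit.app (G.obj d))) ≫ F.map (colimit.ι (G ⋙ U) d) ≫ lintonπ F U adj G =
      adj.counit.app (F.obj (U.obj (G.obj d))) ≫
        F.map (colimit.ι (G ⋙ U) d) ≫ lintonπ F U adj G := by
  rw [← Category.assoc, ← linton_ι_fst, ← Category.assoc, ← linton_ι_snd,
    Category.assoc, Category.assoc]
  congr 1
  exact coequalizer.condition _ _

/-- The legs of the candidate colimit cocone. -/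
noncomputable def lintonLeg (d : D) : G.obj d ⟶ lintonQ F U adj G :=
  lintonDesc F U adj (G.obj d) (F.map (colimit.ι (G ⋙ U) d) ≫ lintonπ F U adj G)
    (lintonA F U adj G d)

lemma linton_counit_leg (d : D) :
    adj.counit.app (G.obj d) ≫ lintonLeg F U adj G d =
      F.map (colimit.ι (G ⋙ U) d) ≫ lintonπ F U adj G :=
  linton_counit_desc F U adj (G.obj d) _ _

/-- The candidate colimit cocone. -/
noncomputable def lintonCocone : Cocone G where
  pt := lintonQ F U adj G
  ι :=
    { app := lintonLeg F U adj G
      naturality := by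
        intro d d' m
        dsimp only [Functor.const_obj_obj, Functor.const_obj_map]
        apply linton_pres_hom_ext F U adj (G.obj d)
        have h1 : adj.counit.app (G.obj d) ≫ G.map m =
            F.map (U.map (G.map m)) ≫ adj.counit.app (G.obj d') :=
          (adj.counit_naturality (G.map m)).symm
        rw [Category.comp_id, ← Category.assoc, h1, Category.assoc,
          linton_counit_leg, linton_counit_leg, ← Category.assoc, ← F.map_comp]
        congr 2
        exact colimit.w (G ⋙ U) m }

/-- The transpose map used for descending out of the coequalizer. -/
noncomputable def lintonH (s : Cocone G) : F.obj (colimit (G ⋙ U)) ⟶ s.pt :=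
  F.map (colimit.desc (G ⋙ U) (U.mapCocone s)) ≫ adj.counit.app s.pt

lemma linton_ι_H (s : Cocone G) (d : D) :
    F.map (colimit.ι (G ⋙ U) d) ≫ lintonH F U adj G s =
      adj.counit.app (G.obj d) ≫ s.ι.app d := by
  rw [lintonH, ← Category.assoc, ← F.map_comp, colimit.ι_desc]
  exact adj.counit_naturality (s.ι.app d)

lemma lintonB (s : Cocone G) :
    lintonFst F U adj G ≫ lintonH F U adj G s = lintonSnd F U adj G ≫ lintonH F U adj G s := by
  apply linton_Fcolim_hom_ext F U adj
  intro d
  rw [← Category.assoc, linton_ι_fst, ← Category.assoc, linton_ι_snd, Category.assoc,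
    Category.assoc, linton_ι_H]
  exact adj.counit_naturality_assoc (adj.counit.app (G.obj d)) (s.ι.app d)

/-- The candidate cocone is a colimit. -/
noncomputable def lintonIsColimit : IsColimit (lintonCocone F U adj G) where
  desc s := coequalizer.desc (lintonH F U adj G s) (lintonB F U adj G s)
  fac s d := by
    apply linton_pres_hom_ext F U adj (G.obj d)
    have : (lintonCocone F U adj G).ι.app d = lintonLeg F U adj G d := rfl
    rw [this]
    refine ((Category.assoc _ _ _).symm.trans ((linton_counit_leg F U adj G d) =≫ _)).trans ?_
    refine (Category.assoc _ _ _).trans ?_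
    have h2 : lintonπ F U adj G ≫ coequalizer.desc (lintonH F U adj G s) (lintonB F U adj G s) =
        lintonH F U adj G s := coequalizer.π_desc _ _
    rw [h2, linton_ι_H]
  uniq s m w := by
    apply coequalizer.hom_ext
    have h2 : lintonπ F U adj G ≫ coequalizer.desc (lintonH F U adj G s) (lintonB F U adj G s) =
        lintonH F U adj G s := coequalizer.π_desc _ _
    show lintonπ F U adj G ≫ m =
      lintonπ F U adj G ≫ coequalizer.desc (lintonH F U adj G s) (lintonB F U adj G s)
    rw [h2]
    apply linton_Fcolim_hom_ext F U adj
    intro d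
    rw [linton_ι_H]
    refine (Category.assoc _ _ _).symm.trans ?_
    rw [← linton_counit_leg]
    refine (Category.assoc _ _ _).trans ?_
    congr 1
    exact w d

end LintonAux

theorem linton_colimits_of_monadic
    {C : Type u₁} {A : Type u₂} {D : Type u₃}
    [Category.{v₁} C] [Category.{v₂} A] [Category.{v₃} D]
    (F : C ⥤ A) (U : A ⥤ C) (adj : F ⊣ U) [MonadicRightAdjoint U]
    [HasColimitsOfShape D C] [HasCoequalizers A] :
    HasColimitsOfShape D A ∧
      ∀ G : D ⥤ A, ∃ t : Cocone G, Nonempty (IsColimit t) ∧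
        t.pt =
          coequalizer
            (F.map (colimMap (Functor.whiskerLeft G (Functor.whiskerRight adj.counit U))))
            (F.map (colimit.post (G ⋙ U) (F ⋙ U)) ≫
              adj.counit.app (F.obj (colimit (G ⋙ U)))) := by
  constructor
  · exact ⟨fun G => HasColimit.mk ⟨lintonCocone F U adj G, lintonIsColimit F U adj G⟩⟩
  · intro G
    exact ⟨lintonCocone F U adj G, ⟨lintonIsColimit F U adj G⟩, rfl⟩
end

section
/- In any multicategory, universal multimorphisms are closed under composition: if u : A₁,…,Aₙ → A is universal and v : B₁,…,B_{k-1}, A, B_{k+1},…,B_m → B is universal, then the composite v ∘_k u : B₁,…,B_{k-1}, A₁,…,Aₙ, B_{k+1},…,B_m → B is universal. -/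
/-!
Statement 6: In any multicategory, universal multimorphisms are closed under composition:
if `u : A₁,…,Aₙ → A` is universal and `v : B₁,…,B_{k-1}, A, B_{k+1},…,B_m → B` is universal,
then the composite `v ∘ₖ u` is universal.

We formalise multicategories with multimorphisms indexed by lists of objects and composition
at a single input position (given by the splitting `Δ₁ ++ a :: Δ₂` of the outer domain).
The associativity/unit/interchange axioms are stated using `HEq`, since the underlying lists of
objects agree only up to (propositional) associativity of list append.
-/

universe u v

/-- A multicategory: objects, multimorphisms from a list of objects to an object, identities,
and composition at one input position, subject to unit, associativity and interchange laws. -/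
structure Multicategory where
  Obj : Type u
  Hom : List Obj → Obj → Type v
  id : ∀ a : Obj, Hom [a] a
  comp : ∀ {Δ₁ Δ₂ Γ : List Obj} {a b : Obj},
    Hom (Δ₁ ++ a :: Δ₂) b → Hom Γ a → Hom (Δ₁ ++ Γ ++ Δ₂) b
  /-- Left unit law: composing the identity with `f` gives back `f`. -/
  id_comp : ∀ {Γ : List Obj} {a : Obj} (f : Hom Γ a),
    HEq (comp (Δ₁ := []) (Δ₂ := []) (id a) f) f
  /-- Right unit law: composing `f` with an identity at any input gives back `f`. -/
  comp_id : ∀ {Δ₁ Δ₂ : List Obj} {a b : Obj} (f : Hom (Δ₁ ++ a :: Δ₂) b),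
    HEq (comp f (id a)) f
  /-- Associativity of nested composition. -/
  assoc : ∀ {Δ₁ Δ₂ Ε₁ Ε₂ Θ : List Obj} {a b c : Obj}
    (v : Hom (Δ₁ ++ a :: Δ₂) b) (u : Hom (Ε₁ ++ c :: Ε₂) a) (w : Hom Θ c)
    (x : Hom ((Δ₁ ++ Ε₁) ++ c :: (Ε₂ ++ Δ₂)) b), HEq x (comp v u) →
    HEq (comp x w) (comp v (comp u w))
  /-- Interchange: composing into two disjoint input positions can be done in either order. -/
  interchange : ∀ {Δ₁ Δ₂ Δ₃ Γ Γ' : List Obj} {a a' b : Obj}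
    (v : Hom (Δ₁ ++ a :: (Δ₂ ++ a' :: Δ₃)) b) (u : Hom Γ a) (u' : Hom Γ' a')
    (x : Hom ((Δ₁ ++ Γ ++ Δ₂) ++ a' :: Δ₃) b)
    (v' : Hom ((Δ₁ ++ a :: Δ₂) ++ a' :: Δ₃) b)
    (y : Hom (Δ₁ ++ a :: (Δ₂ ++ Γ' ++ Δ₃)) b),
    HEq x (comp v u) → HEq v' v → HEq y (comp v' u') →
    HEq (comp x u') (comp y u)

/-- A multimorphism `u : Γ → a` is universal if, for all parameter lists `Δ₁, Δ₂` and all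
codomains `c`, composition with `u` induces a bijection between multimorphisms
`Δ₁, a, Δ₂ → c` and multimorphisms `Δ₁, Γ, Δ₂ → c`. -/
def Multicategory.Universal (M : Multicategory) {Γ : List M.Obj} {a : M.Obj}
    (u : M.Hom Γ a) : Prop :=
  ∀ (Δ₁ Δ₂ : List M.Obj) (c : M.Obj),
    Function.Bijective (fun f : M.Hom (Δ₁ ++ a :: Δ₂) c => M.comp f u)

/-- Universal multimorphisms are closed under composition. -/
theorem universal_comp_universal (M : Multicategory)
    {Γ Δ₁ Δ₂ : List M.Obj} {a b : M.Obj}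
    (u : M.Hom Γ a) (v : M.Hom (Δ₁ ++ a :: Δ₂) b)
    (hu : M.Universal u) (hv : M.Universal v) :
    M.Universal (M.comp v u) := by
  intro Ε₁ Ε₂ c
  have hli : Ε₁ ++ (Δ₁ ++ a :: Δ₂) ++ Ε₂ = (Ε₁ ++ Δ₁) ++ a :: (Δ₂ ++ Ε₂) := by simp
  have hlo : (Ε₁ ++ Δ₁) ++ Γ ++ (Δ₂ ++ Ε₂) = Ε₁ ++ (Δ₁ ++ Γ ++ Δ₂) ++ Ε₂ := by simp
  have h1 : M.Hom (Ε₁ ++ (Δ₁ ++ a :: Δ₂) ++ Ε₂) c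
      = M.Hom ((Ε₁ ++ Δ₁) ++ a :: (Δ₂ ++ Ε₂)) c := by rw [hli]
  have h2 : M.Hom ((Ε₁ ++ Δ₁) ++ Γ ++ (Δ₂ ++ Ε₂)) c
      = M.Hom (Ε₁ ++ (Δ₁ ++ Γ ++ Δ₂) ++ Ε₂) c := by rw [hlo]
  have key : (fun f : M.Hom (Ε₁ ++ b :: Ε₂) c => M.comp f (M.comp v u))
      = (cast h2) ∘ (fun g => M.comp g u) ∘ (cast h1)
        ∘ (fun f : M.Hom (Ε₁ ++ b :: Ε₂) c => M.comp f v) := by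
    funext f
    simp only [Function.comp]
    have hx : HEq (cast h1 (M.comp f v)) (M.comp f v) := cast_heq _ _
    have hassoc := M.assoc f v u (cast h1 (M.comp f v)) hx
    exact eq_of_heq (((cast_heq h2 _).trans hassoc).symm)
  rw [key]
  exact (Equiv.cast h2).bijective.comp ((hu _ _ c).comp
    ((Equiv.cast h1).bijective.comp (hv Ε₁ Ε₂ c)))
end
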